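/- Let W be a standard Brownian motion. For any ε > 0, the random variable M_B := sup_{0 < s < t < ∞} |W(t) - W(s)| / √((t-s)(1 + log(t/(t-s)) + ε|log t|)) is almost surely finite. -/

import Mathlib

open MeasureTheory ProbabilityTheory

/-- A standard Brownian motion: a.s. continuous paths starting at 0, Gaussian
increments with variance t - s, and independent increments over disjoint
consecutive intervals. -/
def IsStandardBM {Ω : Type*} [MeasureSpace Ω] (W : ℝ → Ω → ℝ) : Prop :=
  (∀ t : ℝ, Measurable (W t)) ∧
  (∀ᵐ ω ∂(ℙ : Measure Ω), Continuous fun t : ℝ => W t ω) ∧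
  (∀ᵐ ω ∂(ℙ : Measure Ω), W 0 ω = 0) ∧
  (∀ s t : ℝ, 0 ≤ s → s ≤ t →
    Measure.map (fun ω => W t ω - W s ω) (ℙ : Measure Ω) =
      gaussianReal 0 (Real.toNNReal (t - s))) ∧
  (∀ (n : ℕ) (u : ℕ → ℝ), Monotone u → (∀ i, 0 ≤ u i) →
    iIndepFun
      (fun i : Fin n => fun ω => W (u (i + 1)) ω - W (u i) ω) (ℙ : Measure Ω))

open Real Filter

noncomputable def gwt (n : ℤ) (k : ℕ) : ℝ := 1 + |(n:ℝ)| + Real.log (2 + k)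

lemma log_two_add_nonneg (k : ℕ) : (0:ℝ) ≤ Real.log (2 + k) := by
  apply Real.log_nonneg; have : (0:ℝ) ≤ (k:ℝ) := Nat.cast_nonneg k; linarith

lemma one_le_gwt (n : ℤ) (k : ℕ) : 1 ≤ gwt n k := by
  have h1 : (0:ℝ) ≤ |(n:ℝ)| := abs_nonneg _
  have h2 := log_two_add_nonneg k
  unfold gwt; linarith

lemma gwt_nonneg (n : ℤ) (k : ℕ) : 0 ≤ gwt n k :=
  zero_le_one.trans (one_le_gwt n k)

lemma one_le_sqrt_gwt (n : ℤ) (k : ℕ) : 1 ≤ Real.sqrt (gwt n k) := by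
  rw [show (1:ℝ) = Real.sqrt 1 by simp]
  exact Real.sqrt_le_sqrt (one_le_gwt n k)

lemma aux_real (r a : ℝ) (ha : 2 ≤ a) :
    r - a ≤ Real.exp ((r^2 - a^2)/4) := by
  rcases le_or_gt r a with h | h
  · have := Real.exp_pos ((r^2 - a^2)/4); linarith
  · have h1 : r - a ≤ Real.exp (r - a) := by
      have := Real.add_one_le_exp (r - a); linarith
    refine h1.trans (Real.exp_le_exp.2 ?_)
    nlinarith


lemma lintegral_exp_sq_quarter (v : NNReal) (hv : 0 < v) :
    ∫⁻ x : ℝ, ENNReal.ofReal (Real.exp (x^2 / (4 * v))) ∂(gaussianReal 0 v) =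
      ENNReal.ofReal (Real.sqrt 2) := by
  have hv0 : (0:ℝ) < (v:ℝ) := hv
  rw [gaussianReal_of_var_ne_zero 0 (by exact_mod_cast hv.ne')]
  rw [lintegral_withDensity_eq_lintegral_mul _ (measurable_gaussianPDF 0 v)
    (by fun_prop)]
  have hpt : ∀ x : ℝ, (gaussianPDF 0 v x * ENNReal.ofReal (Real.exp (x^2 / (4*v)))) =
      ENNReal.ofReal ((Real.sqrt (2 * π * v))⁻¹ * Real.exp (-(1/(4*v)) * x^2)) := by
    intro x
    rw [gaussianPDF, ← ENNReal.ofReal_mul (gaussianPDFReal_nonneg 0 v x)]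
    congr 1
    rw [gaussianPDFReal]
    rw [mul_assoc, ← Real.exp_add]
    congr 2
    field_simp
    ring
  simp_rw [Pi.mul_apply, hpt]
  rw [← ofReal_integral_eq_lintegral_ofReal]
  · rw [MeasureTheory.integral_const_mul, integral_gaussian]
    congr 1
    have h1 : π / (1/(4*(v:ℝ))) = 2 * (2 * π * v) := by field_simp; ring
    rw [h1, Real.sqrt_mul (by norm_num : (0:ℝ) ≤ 2), mul_comm (Real.sqrt 2),
      ← mul_assoc, inv_mul_cancel₀ (by positivity), one_mul]
  · exact (integrable_exp_neg_mul_sq (by positivity)).const_mul _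
  · filter_upwards with x
    positivity

section
variable {Ω : Type*} [MeasureSpace Ω] [IsProbabilityMeasure (ℙ : Measure Ω)]

lemma term_bound (W : ℝ → Ω → ℝ) (hmeas : ∀ t : ℝ, Measurable (W t))
    (hlaw : ∀ s t : ℝ, 0 ≤ s → s ≤ t →
      Measure.map (fun ω => W t ω - W s ω) (ℙ : Measure Ω) =
        gaussianReal 0 (Real.toNNReal (t - s))) (n : ℤ) (k : ℕ) :
    ∫⁻ ω, ENNReal.ofReal (|W (((k:ℝ)+1) * 2^(-n)) ω - W ((k:ℝ) * 2^(-n)) ω| /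
        Real.sqrt ((2:ℝ)^(-n)) - 4 * Real.sqrt (gwt n k)) ∂(ℙ : Measure Ω)
      ≤ ENNReal.ofReal (Real.exp (-(4 * gwt n k))) * ENNReal.ofReal (Real.sqrt 2) := by
  have h2n : (0:ℝ) < (2:ℝ)^(-n) := by positivity
  set X : Ω → ℝ := fun ω => W (((k:ℝ)+1) * 2^(-n)) ω - W ((k:ℝ) * 2^(-n)) ω with hX
  have hXm : Measurable X := (hmeas _).sub (hmeas _)
  have hpt : ∀ ω, ENNReal.ofReal (|X ω| / Real.sqrt ((2:ℝ)^(-n)) - 4 * Real.sqrt (gwt n k))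
      ≤ ENNReal.ofReal (Real.exp (-(4 * gwt n k))) *
        ENNReal.ofReal (Real.exp ((X ω)^2 / (4 * (2:ℝ)^(-n)))) := by
    intro ω
    rw [← ENNReal.ofReal_mul (Real.exp_nonneg _), ← Real.exp_add]
    apply ENNReal.ofReal_le_ofReal
    have hg1 := one_le_sqrt_gwt n k
    have haux := aux_real (|X ω| / Real.sqrt ((2:ℝ)^(-n))) (4 * Real.sqrt (gwt n k))
      (by linarith)
    refine haux.trans (le_of_eq ?_)
    congr 1
    have h1 : (|X ω| / Real.sqrt ((2:ℝ)^(-n)))^2 = (X ω)^2 / (2:ℝ)^(-n) := by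
      rw [div_pow, sq_abs, Real.sq_sqrt h2n.le]
    have h2 : (4 * Real.sqrt (gwt n k))^2 = 16 * gwt n k := by
      rw [mul_pow, Real.sq_sqrt (gwt_nonneg n k)]; norm_num
    rw [h1, h2]; field_simp; ring
  set v : NNReal := Real.toNNReal ((2:ℝ)^(-n)) with hv
  have hvr : (v:ℝ) = (2:ℝ)^(-n) := Real.coe_toNNReal _ h2n.le
  have hvpos : 0 < v := Real.toNNReal_pos.2 h2n
  have hfm : Measurable fun x : ℝ => ENNReal.ofReal (Real.exp (x^2/(4*(v:ℝ)))) := by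
    fun_prop
  have hmap : Measure.map X (ℙ : Measure Ω) = gaussianReal 0 v := by
    have hst : (k:ℝ) * 2^(-n) ≤ ((k:ℝ)+1) * 2^(-n) := by nlinarith
    have := hlaw ((k:ℝ) * 2^(-n)) (((k:ℝ)+1) * 2^(-n)) (by positivity) hst
    rw [hX, this]
    congr 1
    rw [hv]; congr 1; ring
  have key : ∫⁻ ω, ENNReal.ofReal (Real.exp ((X ω)^2 / (4 * (2:ℝ)^(-n)))) ∂(ℙ : Measure Ω)
      = ENNReal.ofReal (Real.sqrt 2) := by
    have h := lintegral_map hfm hXm (μ := (ℙ : Measure Ω))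
    rw [hmap, lintegral_exp_sq_quarter v hvpos] at h
    simp_rw [← hvr]
    exact h.symm
  calc ∫⁻ ω, ENNReal.ofReal (|X ω| / Real.sqrt ((2:ℝ)^(-n)) - 4 * Real.sqrt (gwt n k))
        ∂(ℙ : Measure Ω)
      ≤ ∫⁻ ω, ENNReal.ofReal (Real.exp (-(4 * gwt n k))) *
          ENNReal.ofReal (Real.exp ((X ω)^2 / (4 * (2:ℝ)^(-n)))) ∂(ℙ : Measure Ω) :=
        lintegral_mono hpt
    _ = ENNReal.ofReal (Real.exp (-(4 * gwt n k))) *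
        ∫⁻ ω, ENNReal.ofReal (Real.exp ((X ω)^2 / (4 * (2:ℝ)^(-n)))) ∂(ℙ : Measure Ω) :=
        lintegral_const_mul' _ _ ENNReal.ofReal_ne_top
    _ = _ := by rw [key]

lemma sum_exp_gwt_ne_top :
    ∑' p : ℤ × ℕ, ENNReal.ofReal (Real.exp (-(4 * gwt p.1 p.2))) ≠ ⊤ := by
  have hsplit : ∀ (n : ℤ) (k : ℕ), ENNReal.ofReal (Real.exp (-(4 * gwt n k))) =
      ENNReal.ofReal (Real.exp (-(4 * (1 + |(n:ℝ)|)))) *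
      ENNReal.ofReal (((2 + (k:ℝ))^4)⁻¹) := by
    intro n k
    rw [← ENNReal.ofReal_mul (Real.exp_nonneg _)]
    congr 1
    have hk : (0:ℝ) < 2 + (k:ℝ) := by positivity
    have h4 : Real.exp (-(4 * Real.log (2 + (k:ℝ)))) = ((2 + (k:ℝ))^4)⁻¹ := by
      rw [Real.exp_neg]
      congr 1
      rw [show (4:ℝ) * Real.log (2 + (k:ℝ)) = (4:ℕ) * Real.log (2 + (k:ℝ)) by norm_num,
        Real.exp_nat_mul, Real.exp_log hk]
    rw [← h4, ← Real.exp_add]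
    congr 1
    unfold gwt; ring
  rw [ENNReal.tsum_prod (f := fun n k => ENNReal.ofReal (Real.exp (-(4 * gwt n k))))]
  simp_rw [hsplit, ENNReal.tsum_mul_left, ENNReal.tsum_mul_right]
  apply ENNReal.mul_ne_top
  · -- sum over ℤ
    have hs : Summable (fun n : ℤ => Real.exp (-(4 * (1 + |(n:ℝ)|)))) := by
      have hnat : Summable (fun m : ℕ => Real.exp (-4) * Real.exp (-4) ^ m) :=
        (summable_geometric_of_lt_one (Real.exp_nonneg _)
          (Real.exp_lt_one_iff.2 (by norm_num))).mul_left _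
      have hform : ∀ m : ℕ, Real.exp (-(4 * (1 + (m:ℝ)))) =
          Real.exp (-4) * Real.exp (-4) ^ m := by
        intro m
        rw [← Real.exp_nat_mul, ← Real.exp_add]
        congr 1; ring
      apply Summable.of_nat_of_neg
      · apply hnat.congr; intro m; rw [← hform]; norm_num
      · apply hnat.congr; intro m; rw [← hform]; push_cast; rw [abs_neg, abs_of_nonneg (by positivity : (0:ℝ) ≤ (m:ℝ))]
    rw [← ENNReal.ofReal_tsum_of_nonneg (fun n => Real.exp_nonneg _) hs]
    exact ENNReal.ofReal_ne_top
  · -- sum over ℕ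
    have hs : Summable (fun k : ℕ => ((2 + (k:ℝ))^4)⁻¹) := by
      have h4 : Summable (fun k : ℕ => (((k:ℝ))^4)⁻¹) :=
        Real.summable_nat_pow_inv.2 (by norm_num)
      have := (summable_nat_add_iff (f := fun k : ℕ => (((k:ℝ))^4)⁻¹) 2).2 h4
      apply this.congr
      intro k
      push_cast
      ring_nf
    rw [← ENNReal.ofReal_tsum_of_nonneg (fun k => by positivity) hs]
    exact ENNReal.ofReal_ne_top

lemma ae_grid_bound (W : ℝ → Ω → ℝ) (hmeas : ∀ t : ℝ, Measurable (W t))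
    (hlaw : ∀ s t : ℝ, 0 ≤ s → s ≤ t →
      Measure.map (fun ω => W t ω - W s ω) (ℙ : Measure Ω) =
        gaussianReal 0 (Real.toNNReal (t - s))) :
    ∀ᵐ ω ∂(ℙ : Measure Ω), ∃ C₀ : ℝ, 0 ≤ C₀ ∧ ∀ (n : ℤ) (k : ℕ),
      |W (((k:ℝ)+1) * 2^(-n)) ω - W ((k:ℝ) * 2^(-n)) ω| ≤
        C₀ * (Real.sqrt ((2:ℝ)^(-n)) * Real.sqrt (gwt n k)) := by
  set F : ℤ × ℕ → Ω → ENNReal := fun p ω =>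
    ENNReal.ofReal (|W (((p.2:ℝ)+1) * 2^(-p.1)) ω - W ((p.2:ℝ) * 2^(-p.1)) ω| /
      Real.sqrt ((2:ℝ)^(-p.1)) - 4 * Real.sqrt (gwt p.1 p.2)) with hF
  have hFm : ∀ p, Measurable (F p) := by
    intro p
    apply ENNReal.measurable_ofReal.comp
    exact ((((hmeas _).sub (hmeas _)).abs.div_const _).sub measurable_const)
  have hlt : ∫⁻ ω, ∑' p, F p ω ∂(ℙ : Measure Ω) ≠ ⊤ := by
    rw [lintegral_tsum (fun p => (hFm p).aemeasurable)]
    have h1 : ∑' p : ℤ × ℕ, ∫⁻ ω, F p ω ∂(ℙ : Measure Ω) ≤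
        ∑' p : ℤ × ℕ, ENNReal.ofReal (Real.exp (-(4 * gwt p.1 p.2))) *
          ENNReal.ofReal (Real.sqrt 2) :=
      ENNReal.tsum_le_tsum (fun p => term_bound W hmeas hlaw p.1 p.2)
    rw [ENNReal.tsum_mul_right] at h1
    exact ne_top_of_le_ne_top
      (ENNReal.mul_ne_top sum_exp_gwt_ne_top ENNReal.ofReal_ne_top) h1
  have hae := ae_lt_top (Measurable.ennreal_tsum hFm) hlt
  filter_upwards [hae] with ω hω
  set T : ℝ := (∑' p, F p ω).toReal with hT
  have hT0 : 0 ≤ T := ENNReal.toReal_nonneg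
  refine ⟨4 + T, by linarith, ?_⟩
  intro n k
  set X : ℝ := |W (((k:ℝ)+1) * 2^(-n)) ω - W ((k:ℝ) * 2^(-n)) ω| with hXdef
  have hX0 : 0 ≤ X := abs_nonneg _
  have hs : (0:ℝ) < Real.sqrt ((2:ℝ)^(-n)) := Real.sqrt_pos.2 (by positivity)
  have hterm : F (n, k) ω ≤ ∑' p, F p ω := ENNReal.le_tsum _
  have hr : X / Real.sqrt ((2:ℝ)^(-n)) - 4 * Real.sqrt (gwt n k) ≤ T := by
    rcases le_or_gt (X / Real.sqrt ((2:ℝ)^(-n)) - 4 * Real.sqrt (gwt n k)) 0 with h | h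
    · linarith
    · have : F (n, k) ω = ENNReal.ofReal
          (X / Real.sqrt ((2:ℝ)^(-n)) - 4 * Real.sqrt (gwt n k)) := rfl
      rw [this] at hterm
      have h2 := ENNReal.toReal_mono hω.ne hterm
      rwa [ENNReal.toReal_ofReal h.le] at h2
  have hg1 := one_le_sqrt_gwt n k
  have hfinal : X / Real.sqrt ((2:ℝ)^(-n)) ≤ (4 + T) * Real.sqrt (gwt n k) := by
    nlinarith
  calc X = (X / Real.sqrt ((2:ℝ)^(-n))) * Real.sqrt ((2:ℝ)^(-n)) := by
        field_simp
    _ ≤ ((4 + T) * Real.sqrt (gwt n k)) * Real.sqrt ((2:ℝ)^(-n)) := by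
        apply mul_le_mul_of_nonneg_right hfinal hs.le
    _ = (4 + T) * (Real.sqrt ((2:ℝ)^(-n)) * Real.sqrt (gwt n k)) := by ring

end

noncomputable def grd (u : ℝ) (n : ℤ) : ℝ := (⌊u * (2:ℝ)^n⌋ : ℝ) * (2:ℝ)^(-n)

lemma two_zpow_pos (n : ℤ) : (0:ℝ) < (2:ℝ)^n := by positivity

lemma grd_le (u : ℝ) (n : ℤ) : grd u n ≤ u := by
  have h := Int.floor_le (u * (2:ℝ)^n)
  have h2 := two_zpow_pos n
  have h3 := two_zpow_pos (-n)
  have := mul_le_mul_of_nonneg_right h h3.le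
  calc grd u n ≤ u * (2:ℝ)^n * (2:ℝ)^(-n) := this
    _ = u := by rw [mul_assoc, ← zpow_add₀ (two_ne_zero), add_neg_cancel, zpow_zero, mul_one]

lemma lt_grd_add (u : ℝ) (n : ℤ) : u < grd u n + (2:ℝ)^(-n) := by
  have h := Int.lt_floor_add_one (u * (2:ℝ)^n)
  have h3 := two_zpow_pos (-n)
  have := mul_lt_mul_of_pos_right h h3
  have heq : (u * (2:ℝ)^n) * (2:ℝ)^(-n) = u := by
    rw [mul_assoc, ← zpow_add₀ (two_ne_zero), add_neg_cancel, zpow_zero, mul_one]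
  calc u = (u * (2:ℝ)^n) * (2:ℝ)^(-n) := heq.symm
    _ < ((⌊u * (2:ℝ)^n⌋ : ℝ) + 1) * (2:ℝ)^(-n) := this
    _ = grd u n + (2:ℝ)^(-n) := by unfold grd; ring

lemma grd_nonneg {u : ℝ} (hu : 0 ≤ u) (n : ℤ) : 0 ≤ grd u n := by
  have : (0:ℤ) ≤ ⌊u * (2:ℝ)^n⌋ := Int.floor_nonneg.2 (by positivity)
  have h3 := two_zpow_pos (-n)
  unfold grd
  have : (0:ℝ) ≤ (⌊u * (2:ℝ)^n⌋ : ℝ) := by exact_mod_cast this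
  positivity

lemma floor_double (u : ℝ) (n : ℤ) :
    ⌊u * (2:ℝ)^n⌋ = 2 * ⌊u * (2:ℝ)^(n-1)⌋ ∨
    ⌊u * (2:ℝ)^n⌋ = 2 * ⌊u * (2:ℝ)^(n-1)⌋ + 1 := by
  set y := u * (2:ℝ)^(n-1) with hy
  have hdn : u * (2:ℝ)^n = 2 * y := by
    rw [hy, show n = (n-1) + 1 by ring, zpow_add₀ (two_ne_zero : (2:ℝ) ≠ 0)]
    ring
  set m := ⌊y⌋ with hm
  have h1 : 2 * m ≤ ⌊u * (2:ℝ)^n⌋ := by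
    rw [hdn]
    apply Int.le_floor.2
    push_cast
    have := Int.floor_le y
    linarith
  have h2 : ⌊u * (2:ℝ)^n⌋ < 2 * m + 2 := by
    rw [hdn]
    apply Int.floor_lt.2
    push_cast
    have := Int.lt_floor_add_one y
    linarith
  omega

noncomputable def GB (n : ℤ) (T : ℝ) : ℝ := 2 + 2*|(n:ℝ)| + Real.log (2 + T)

lemma GB_nonneg {T : ℝ} (hT : 0 < T) (n : ℤ) : 0 ≤ GB n T := by
  have h1 : (0:ℝ) ≤ |(n:ℝ)| := abs_nonneg _
  have h2 : (0:ℝ) ≤ Real.log (2 + T) := Real.log_nonneg (by linarith)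
  unfold GB; linarith

lemma two_le_GB {T : ℝ} (hT : 0 < T) (n : ℤ) : 2 ≤ GB n T := by
  have h1 : (0:ℝ) ≤ |(n:ℝ)| := abs_nonneg _
  have h2 : (0:ℝ) ≤ Real.log (2 + T) := Real.log_nonneg (by linarith)
  unfold GB; linarith

lemma gwt_le_GB {T : ℝ} (hT : 0 < T) (n : ℤ) (k : ℕ) (hk : (k:ℝ) ≤ T * (2:ℝ)^n) :
    gwt n k ≤ GB n T := by
  have hlog : Real.log (2 + (k:ℝ)) ≤ Real.log (2 + T) + (|(n:ℝ)| + 1) := by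
    have hkey : 2 + (k:ℝ) ≤ (2 + T) * (2:ℝ)^(max n 0 + 1) := by
      rcases le_or_gt n 0 with hn | hn
      · rw [max_eq_right hn]
        have h2n : (2:ℝ)^n ≤ 1 := zpow_le_one_of_nonpos₀ (by norm_num) hn
        have : T * (2:ℝ)^n ≤ T := by nlinarith [two_zpow_pos n]
        norm_num
        nlinarith
      · rw [max_eq_left hn.le]
        have h1 : (1:ℝ) ≤ (2:ℝ)^n := one_le_zpow₀ (by norm_num) hn.le
        have h2 : (2:ℝ)^(n+1) = 2 * (2:ℝ)^n := by
          rw [zpow_add₀ (two_ne_zero : (2:ℝ) ≠ 0)]; ring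
        rw [h2]
        nlinarith
    have h1 : Real.log (2 + (k:ℝ)) ≤ Real.log ((2 + T) * (2:ℝ)^(max n 0 + 1)) := by
      apply Real.log_le_log (by positivity) hkey
    rw [Real.log_mul (by linarith) (by positivity), Real.log_zpow] at h1
    have h2 : ((max n 0 + 1 : ℤ):ℝ) * Real.log 2 ≤ |(n:ℝ)| + 1 := by
      have hl2 : Real.log 2 ≤ 1 := by
        have := Real.log_two_lt_d9; linarith
      have hl2' : 0 < Real.log 2 := Real.log_pos (by norm_num)
      have hm : ((max n 0 + 1 : ℤ):ℝ) ≤ |(n:ℝ)| + 1 := by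
        push_cast
        have : ((max n 0 : ℤ):ℝ) ≤ |(n:ℝ)| := by
          rcases le_or_gt n 0 with h | h
          · rw [max_eq_right h]; simp
          · rw [max_eq_left h.le]; push_cast; exact le_abs_self _
        push_cast at this
        linarith
      have hm0 : (0:ℝ) ≤ ((max n 0 + 1 : ℤ):ℝ) := by
        exact_mod_cast (by omega : (0:ℤ) ≤ max n 0 + 1)
      nlinarith
    linarith
  unfold gwt GB
  linarith

section
variable (f : ℝ → ℝ) (C₀ : ℝ)

lemma grid_inc_le (hC₀ : 0 ≤ C₀)
    (hinc : ∀ (n : ℤ) (k : ℕ), |f (((k:ℝ)+1) * 2^(-n)) - f ((k:ℝ) * 2^(-n))| ≤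
      C₀ * (Real.sqrt ((2:ℝ)^(-n)) * Real.sqrt (gwt n k)))
    {T : ℝ} (hT : 0 < T) (n : ℤ) (k : ℕ) (hk : (k:ℝ) ≤ T * (2:ℝ)^n) :
    |f (((k:ℝ)+1) * 2^(-n)) - f ((k:ℝ) * 2^(-n))| ≤
      C₀ * (Real.sqrt ((2:ℝ)^(-n)) * Real.sqrt (GB n T)) := by
  refine (hinc n k).trans ?_
  have h1 : Real.sqrt (gwt n k) ≤ Real.sqrt (GB n T) :=
    Real.sqrt_le_sqrt (gwt_le_GB hT n k hk)
  have h2 : (0:ℝ) ≤ Real.sqrt ((2:ℝ)^(-n)) := Real.sqrt_nonneg _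
  gcongr

lemma level_bound (hC₀ : 0 ≤ C₀)
    (hinc : ∀ (n : ℤ) (k : ℕ), |f (((k:ℝ)+1) * 2^(-n)) - f ((k:ℝ) * 2^(-n))| ≤
      C₀ * (Real.sqrt ((2:ℝ)^(-n)) * Real.sqrt (gwt n k)))
    {T u : ℝ} (hu : 0 < u) (huT : u ≤ T) (n : ℤ) :
    |f (grd u n) - f (grd u (n-1))| ≤
      C₀ * (Real.sqrt ((2:ℝ)^(-n)) * Real.sqrt (GB n T)) := by
  have hT : 0 < T := lt_of_lt_of_le hu huT
  have hgrdeq : grd u (n-1) = ((2 * ⌊u * (2:ℝ)^(n-1)⌋ : ℤ):ℝ) * (2:ℝ)^(-n) := by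
    unfold grd
    push_cast
    rw [show -(n-1) = -n + 1 by ring, zpow_add₀ (two_ne_zero : (2:ℝ) ≠ 0)]
    ring
  rcases floor_double u n with h | h
  · have : grd u n = grd u (n-1) := by
      unfold grd
      rw [h, show -(n-1) = -n + 1 by ring, zpow_add₀ (two_ne_zero : (2:ℝ) ≠ 0)]
      push_cast
      ring
    rw [this, sub_self, abs_zero]
    have := GB_nonneg hT n
    positivity
  · -- increment case
    set m := ⌊u * (2:ℝ)^(n-1)⌋ with hm
    have hm0 : 0 ≤ m := Int.floor_nonneg.2 (by positivity)
    set k : ℕ := (2 * m).toNat with hk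
    have hkc : ((k:ℤ):ℝ) = ((2*m : ℤ):ℝ) := by
      rw [hk]; congr 1; exact Int.toNat_of_nonneg (by omega)
    have hgn : grd u n = ((k:ℝ) + 1) * (2:ℝ)^(-n) := by
      unfold grd
      rw [h]
      push_cast
      push_cast at hkc
      rw [hkc]
    have hgn1 : grd u (n-1) = (k:ℝ) * (2:ℝ)^(-n) := by
      rw [hgrdeq]
      push_cast at hkc ⊢
      rw [hkc]
    rw [hgn, hgn1]
    apply grid_inc_le f C₀ hC₀ hinc hT
    -- (k:ℝ) ≤ T * 2^n
    have h1 : ((2*m:ℤ):ℝ) + 1 ≤ u * (2:ℝ)^n := by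
      have := Int.floor_le (u * (2:ℝ)^n)
      rw [h] at this
      push_cast at this ⊢
      linarith
    have h2 : u * (2:ℝ)^n ≤ T * (2:ℝ)^n :=
      mul_le_mul_of_nonneg_right huT (two_zpow_pos n).le
    push_cast at hkc h1
    rw [hkc]
    linarith

lemma middle_bound (hC₀ : 0 ≤ C₀)
    (hinc : ∀ (n : ℤ) (k : ℕ), |f (((k:ℝ)+1) * 2^(-n)) - f ((k:ℝ) * 2^(-n))| ≤
      C₀ * (Real.sqrt ((2:ℝ)^(-n)) * Real.sqrt (gwt n k)))
    {s t : ℝ} (hs : 0 < s) (hst : s < t) (n : ℤ)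
    (hδ : t - s < 2 * (2:ℝ)^(-n)) :
    |f (grd t n) - f (grd s n)| ≤
      2 * (C₀ * (Real.sqrt ((2:ℝ)^(-n)) * Real.sqrt (GB n t))) := by
  have ht : 0 < t := hs.trans hst
  set a := ⌊s * (2:ℝ)^n⌋ with ha
  set b := ⌊t * (2:ℝ)^n⌋ with hb
  have ha0 : 0 ≤ a := Int.floor_nonneg.2 (by positivity)
  have hab : a ≤ b := Int.floor_le_floor
    (mul_le_mul_of_nonneg_right hst.le (two_zpow_pos n).le)
  have hble : (b:ℝ) ≤ t * (2:ℝ)^n := Int.floor_le _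
  have halt : s * (2:ℝ)^n - 1 < a := by
    have := Int.lt_floor_add_one (s * (2:ℝ)^n); linarith
  have hd2 : b ≤ a + 2 := by
    have hgap : t * (2:ℝ)^n - s * (2:ℝ)^n < 2 := by
      have h1 : (t - s) * (2:ℝ)^n < 2 * (2:ℝ)^(-n) * (2:ℝ)^n :=
        mul_lt_mul_of_pos_right hδ (two_zpow_pos n)
      have h2 : (2:ℝ)^(-n) * (2:ℝ)^n = 1 := by
        rw [← zpow_add₀ (two_ne_zero : (2:ℝ) ≠ 0), neg_add_cancel, zpow_zero]
      nlinarith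
    have : (b:ℝ) < (a:ℝ) + 3 := by linarith
    have hb3 : b < a + 3 := by exact_mod_cast this
    omega
  have hsgrd : grd s n = (a:ℝ) * (2:ℝ)^(-n) := rfl
  have htgrd : grd t n = (b:ℝ) * (2:ℝ)^(-n) := rfl
  have hRHS0 : 0 ≤ C₀ * (Real.sqrt ((2:ℝ)^(-n)) * Real.sqrt (GB n t)) := by
    have := GB_nonneg ht n; positivity
  rcases (by omega : b = a ∨ b = a + 1 ∨ b = a + 2) with h | h | h
  · rw [htgrd, hsgrd, h, sub_self, abs_zero]; linarith
  · set k : ℕ := a.toNat with hk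
    have hkc : (k:ℝ) = (a:ℝ) := by
      rw [hk]
      exact_mod_cast Int.toNat_of_nonneg ha0
    have hone : |f (((k:ℝ)+1) * 2^(-n)) - f ((k:ℝ) * 2^(-n))| ≤
        C₀ * (Real.sqrt ((2:ℝ)^(-n)) * Real.sqrt (GB n t)) := by
      apply grid_inc_le f C₀ hC₀ hinc ht
      rw [hkc]
      have : (a:ℝ) ≤ s * (2:ℝ)^n := Int.floor_le _
      have h2 : s * (2:ℝ)^n ≤ t * (2:ℝ)^n :=
        mul_le_mul_of_nonneg_right hst.le (two_zpow_pos n).le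
      linarith
    rw [htgrd, hsgrd, h]
    push_cast
    rw [← hkc]
    calc |f (((k:ℝ)+1) * 2^(-n)) - f ((k:ℝ) * 2^(-n))| ≤ _ := hone
      _ ≤ _ := by linarith
  · set k : ℕ := a.toNat with hk
    have hkc : (k:ℝ) = (a:ℝ) := by
      rw [hk]
      exact_mod_cast Int.toNat_of_nonneg ha0
    have hfloor_le : (a:ℝ) + 2 ≤ t * (2:ℝ)^n := by
      rw [show ((a:ℝ)+2) = ((a + 2 : ℤ):ℝ) by push_cast; ring, ← h]; exact hble
    have hone : |f (((k:ℝ)+1) * 2^(-n)) - f ((k:ℝ) * 2^(-n))| ≤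
        C₀ * (Real.sqrt ((2:ℝ)^(-n)) * Real.sqrt (GB n t)) := by
      apply grid_inc_le f C₀ hC₀ hinc ht
      rw [hkc]; linarith
    have htwo : |f ((((k+1:ℕ):ℝ)+1) * 2^(-n)) - f (((k+1:ℕ):ℝ) * 2^(-n))| ≤
        C₀ * (Real.sqrt ((2:ℝ)^(-n)) * Real.sqrt (GB n t)) := by
      apply grid_inc_le f C₀ hC₀ hinc ht
      push_cast
      rw [hkc]; linarith
    rw [htgrd, hsgrd, h]
    push_cast
    rw [← hkc]
    have tri : |f (((k:ℝ)+2) * 2^(-n)) - f ((k:ℝ) * 2^(-n))| ≤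
        |f (((k:ℝ)+2) * 2^(-n)) - f (((k:ℝ)+1) * 2^(-n))| +
        |f (((k:ℝ)+1) * 2^(-n)) - f ((k:ℝ) * 2^(-n))| := by
      have := abs_sub_abs_le_abs_sub (f (((k:ℝ)+2) * 2^(-n))) (f ((k:ℝ) * 2^(-n)))
      exact abs_sub_le _ _ _
    push_cast at htwo
    have htwo' : |f (((k:ℝ)+2) * 2^(-n)) - f (((k:ℝ)+1) * 2^(-n))| ≤
        C₀ * (Real.sqrt ((2:ℝ)^(-n)) * Real.sqrt (GB n t)) := by
      convert htwo using 3 <;> ring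
    calc |f (((k:ℝ)+2) * 2^(-n)) - f ((k:ℝ) * 2^(-n))| ≤ _ := tri
      _ ≤ 2 * (C₀ * (Real.sqrt ((2:ℝ)^(-n)) * Real.sqrt (GB n t))) := by linarith

lemma nat_growth (j : ℕ) : (j:ℝ) + 2 ≤ 8 * (9/8)^j := by
  induction j with
  | zero => norm_num
  | succ m ih =>
    have h1 : (1:ℝ) ≤ (9/8)^m := one_le_pow₀ (by norm_num)
    push_cast
    calc (m:ℝ) + 1 + 2 ≤ 8 * (9/8)^m + 1 := by linarith
      _ ≤ 8 * (9/8)^(m+1) := by rw [pow_succ]; nlinarith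

lemma tail_term_bound {T : ℝ} (hT : 0 < T) (n₀ : ℤ) (j : ℕ) :
    Real.sqrt ((2:ℝ)^(-(n₀+j+1))) * Real.sqrt (GB (n₀+j+1) T) ≤
      (Real.sqrt ((2:ℝ)^(-n₀)) * Real.sqrt (GB n₀ T)) * (2 * (3/4:ℝ)^j) := by
  have hGB0 := GB_nonneg hT n₀
  have hGB0' := GB_nonneg hT (n₀+j+1)
  have h2p := two_zpow_pos (-(n₀+j+1))
  have h2p0 := two_zpow_pos (-n₀)
  rw [← Real.sqrt_mul h2p.le, ← Real.sqrt_mul h2p0.le]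
  have hrhs : Real.sqrt ((2:ℝ)^(-n₀) * GB n₀ T) * (2 * (3/4:ℝ)^j) =
      Real.sqrt (((2:ℝ)^(-n₀) * GB n₀ T) * (4 * (9/16:ℝ)^j)) := by
    have h49 : (4:ℝ) * (9/16:ℝ)^j = (2 * (3/4:ℝ)^j)^2 := by
      rw [mul_pow, ← pow_mul, show (9/16:ℝ) = (3/4:ℝ)^2 by norm_num, ← pow_mul,
        mul_comm j 2]
      norm_num
    rw [h49, Real.sqrt_mul (by positivity : (0:ℝ) ≤ (2:ℝ)^(-n₀) * GB n₀ T),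
      Real.sqrt_sq (by positivity), Real.sqrt_mul h2p0.le]
  rw [hrhs]
  apply Real.sqrt_le_sqrt
  -- key real inequality
  have hsplit : (2:ℝ)^(-(n₀+j+1)) = (2:ℝ)^(-n₀) * (1/2:ℝ)^(j+1) := by
    have hh : ((1:ℝ)/2)^(j+1) = (2:ℝ)^(-((j:ℤ)+1)) := by
      rw [one_div, inv_pow, ← zpow_natCast (2:ℝ) (j+1), ← zpow_neg]
      norm_cast
    rw [hh, ← zpow_add₀ (two_ne_zero : (2:ℝ) ≠ 0)]
    congr 1
    ring
  have hGBle : GB (n₀+j+1) T ≤ GB n₀ T + 2*((j:ℝ)+1) := by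
    unfold GB
    have : |((n₀+j+1 : ℤ):ℝ)| ≤ |(n₀:ℝ)| + ((j:ℝ)+1) := by
      push_cast
      calc |(n₀:ℝ) + j + 1| ≤ |(n₀:ℝ)| + |(j:ℝ)+1| := by
            rw [add_assoc]; exact abs_add_le _ _
        _ = |(n₀:ℝ)| + ((j:ℝ)+1) := by
            congr 1
            exact abs_of_nonneg (by positivity)
    linarith
  have hGB2 := two_le_GB hT n₀
  have hstep : GB n₀ T + 2*((j:ℝ)+1) ≤ GB n₀ T * ((j:ℝ) + 2) := by nlinarith
  have hgeom : (1/2:ℝ)^(j+1) * ((j:ℝ)+2) ≤ 4 * (9/16:ℝ)^j := by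
    have hng := nat_growth j
    have hp : (0:ℝ) < (1/2:ℝ)^(j+1) := by positivity
    have key : (1/2:ℝ)^(j+1) * ((j:ℝ)+2) ≤ (1/2:ℝ)^(j+1) * (8 * (9/8)^j) :=
      mul_le_mul_of_nonneg_left hng hp.le
    refine key.trans (le_of_eq ?_)
    rw [pow_succ]
    rw [show (9/16:ℝ)^j = (1/2:ℝ)^j * (9/8:ℝ)^j by rw [← mul_pow]; norm_num]
    ring
  calc (2:ℝ)^(-(n₀+j+1)) * GB (n₀+j+1) T
      ≤ (2:ℝ)^(-n₀) * (1/2:ℝ)^(j+1) * (GB n₀ T * ((j:ℝ)+2)) := by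
        rw [hsplit]
        apply mul_le_mul (le_refl _) (hGBle.trans hstep) (GB_nonneg hT _) (by positivity)
    _ = (2:ℝ)^(-n₀) * GB n₀ T * ((1/2:ℝ)^(j+1) * ((j:ℝ)+2)) := by ring
    _ ≤ (2:ℝ)^(-n₀) * GB n₀ T * (4 * (9/16:ℝ)^j) := by
        apply mul_le_mul_of_nonneg_left hgeom (by positivity)

lemma tail_bound (hf : Continuous f) (hC₀ : 0 ≤ C₀)
    (hinc : ∀ (n : ℤ) (k : ℕ), |f (((k:ℝ)+1) * 2^(-n)) - f ((k:ℝ) * 2^(-n))| ≤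
      C₀ * (Real.sqrt ((2:ℝ)^(-n)) * Real.sqrt (gwt n k)))
    {T u : ℝ} (hu : 0 < u) (huT : u ≤ T) (n₀ : ℤ) :
    |f u - f (grd u n₀)| ≤ 8 * (C₀ * (Real.sqrt ((2:ℝ)^(-n₀)) * Real.sqrt (GB n₀ T))) := by
  have hT : 0 < T := hu.trans_le huT
  set M := C₀ * (Real.sqrt ((2:ℝ)^(-n₀)) * Real.sqrt (GB n₀ T)) with hM
  have hM0 : 0 ≤ M := by
    have := GB_nonneg hT n₀; rw [hM]; positivity
  -- partial sums bound
  have hpartial : ∀ m : ℕ, |f (grd u (n₀+m)) - f (grd u n₀)| ≤ 8 * M := by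
    intro m
    have htele : f (grd u (n₀+m)) - f (grd u n₀) =
        ∑ j ∈ Finset.range m, (f (grd u (n₀+j+1)) - f (grd u (n₀+j))) := by
      have h := Finset.sum_range_sub (fun j : ℕ => f (grd u (n₀ + (j:ℤ)))) m
      simp only [Nat.cast_zero, add_zero] at h
      rw [← h]
      apply Finset.sum_congr rfl
      intro j _
      have harg : (n₀ + ((j+1:ℕ):ℤ)) = n₀ + (j:ℤ) + 1 := by push_cast; ring
      rw [harg]
    rw [htele]
    calc |∑ j ∈ Finset.range m, (f (grd u (n₀+j+1)) - f (grd u (n₀+j)))|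
        ≤ ∑ j ∈ Finset.range m, |f (grd u (n₀+j+1)) - f (grd u (n₀+j))| :=
          Finset.abs_sum_le_sum_abs _ _
      _ ≤ ∑ j ∈ Finset.range m, M * (2 * (3/4:ℝ)^j) := by
          apply Finset.sum_le_sum
          intro j _
          have hlb := level_bound f C₀ hC₀ hinc hu huT (n₀+j+1)
          rw [show n₀+(j:ℤ)+1-1 = n₀+j by ring] at hlb
          refine hlb.trans ?_
          have httb := tail_term_bound hT n₀ j
          rw [hM]
          calc C₀ * (Real.sqrt ((2:ℝ)^(-(n₀+j+1))) * Real.sqrt (GB (n₀+j+1) T))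
              ≤ C₀ * ((Real.sqrt ((2:ℝ)^(-n₀)) * Real.sqrt (GB n₀ T)) * (2*(3/4:ℝ)^j)) :=
                mul_le_mul_of_nonneg_left httb hC₀
            _ = C₀ * (Real.sqrt ((2:ℝ)^(-n₀)) * Real.sqrt (GB n₀ T)) * (2*(3/4:ℝ)^j) := by
                ring
      _ = M * 2 * ∑ j ∈ Finset.range m, (3/4:ℝ)^j := by
          rw [Finset.mul_sum]; apply Finset.sum_congr rfl; intros; ring
      _ ≤ M * 2 * 4 := by
          apply mul_le_mul_of_nonneg_left _ (by linarith)
          have hsum : ∑ j ∈ Finset.range m, (3/4:ℝ)^j ≤ (1 - 3/4)⁻¹ := by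
            apply Summable.sum_le_tsum (Finset.range m) (fun j _ => by positivity)
              (summable_geometric_of_lt_one (by norm_num) (by norm_num)) |>.trans
            rw [tsum_geometric_of_lt_one (by norm_num) (by norm_num)]
          norm_num at hsum ⊢
          linarith
      _ = 8 * M := by ring
  -- limit
  have hgeo : Tendsto (fun m : ℕ => (2:ℝ)^(-n₀) * (1/2:ℝ)^m) atTop (nhds 0) := by
    rw [show (0:ℝ) = (2:ℝ)^(-n₀) * 0 by ring]
    exact (tendsto_pow_atTop_nhds_zero_of_lt_one (by norm_num) (by norm_num)).const_mul _
  have hdist : ∀ m : ℕ, |grd u (n₀+m) - u| ≤ (2:ℝ)^(-n₀) * (1/2:ℝ)^m := by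
    intro m
    have h1 := grd_le u (n₀+m)
    have h2 := lt_grd_add u (n₀+m)
    have h3 : (2:ℝ)^(-(n₀+(m:ℤ))) = (2:ℝ)^(-n₀) * (1/2:ℝ)^m := by
      rw [show -(n₀+(m:ℤ)) = -n₀ + (-(m:ℤ)) by ring,
        zpow_add₀ (two_ne_zero : (2:ℝ) ≠ 0)]
      congr 1
      have hh : ((1:ℝ)/2)^m = (2:ℝ)^(-(m:ℤ)) := by
        rw [one_div, inv_pow, ← zpow_natCast (2:ℝ) m, ← zpow_neg]
      rw [hh]
    rw [abs_le]
    constructor <;> [skip; linarith]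
    rw [← h3]
    linarith
  have hgrd_tendsto : Tendsto (fun m : ℕ => grd u (n₀+m)) atTop (nhds u) := by
    rw [tendsto_iff_dist_tendsto_zero]
    apply squeeze_zero (fun m => dist_nonneg) _ hgeo
    intro m
    rw [Real.dist_eq]
    exact hdist m
  have hflim : Tendsto (fun m : ℕ => |f (grd u (n₀+m)) - f (grd u n₀)|) atTop
      (nhds (|f u - f (grd u n₀)|)) := by
    have h1 : Tendsto (fun m : ℕ => f (grd u (n₀+m))) atTop (nhds (f u)) :=
      (hf.tendsto u).comp hgrd_tendsto
    exact (h1.sub_const _).abs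
  exact le_of_tendsto hflim (Eventually.of_forall hpartial)

lemma chaining (hf : Continuous f) (hC₀ : 0 ≤ C₀)
    (hinc : ∀ (n : ℤ) (k : ℕ), |f (((k:ℝ)+1) * 2^(-n)) - f ((k:ℝ) * 2^(-n))| ≤
      C₀ * (Real.sqrt ((2:ℝ)^(-n)) * Real.sqrt (gwt n k)))
    {ε : ℝ} (hε : 0 < ε) (s t : ℝ) (hs : 0 < s) (hst : s < t) :
    |f t - f s| ≤ (18 * Real.sqrt (10 + 5/ε) * C₀) *
      Real.sqrt ((t - s) * (1 + Real.log (t/(t-s)) + ε * |Real.log t|)) := by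
  have ht : 0 < t := hs.trans hst
  set δ := t - s with hδdef
  have hδ : 0 < δ := by rw [hδdef]; linarith
  have hδt : δ ≤ t := by rw [hδdef]; linarith
  set n₀ : ℤ := -⌊Real.logb 2 δ⌋ with hn₀
  set x := Real.logb 2 δ with hx
  have hzrp : ∀ m : ℤ, (2:ℝ)^m = (2:ℝ)^((m:ℝ)) := fun m => (Real.rpow_intCast 2 m).symm
  have hdelta_eq : (2:ℝ)^x = δ := Real.rpow_logb (by norm_num) (by norm_num) hδ
  have h1 : (2:ℝ)^(-n₀) ≤ δ := by
    rw [hn₀, neg_neg, hzrp]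
    rw [← hdelta_eq]
    exact Real.rpow_le_rpow_of_exponent_le (by norm_num) (Int.floor_le x)
  have h2 : δ < 2 * (2:ℝ)^(-n₀) := by
    rw [hn₀, neg_neg, hzrp]
    have hlt : (2:ℝ)^x < (2:ℝ)^(((⌊x⌋:ℝ)) + 1) :=
      Real.rpow_lt_rpow_of_exponent_lt (by norm_num) (Int.lt_floor_add_one x)
    rw [Real.rpow_add (by norm_num), Real.rpow_one] at hlt
    rw [← hdelta_eq]
    linarith
  have htt := tail_bound f C₀ hf hC₀ hinc ht (le_refl t) n₀
  have hts := tail_bound f C₀ hf hC₀ hinc hs hst.le n₀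
  have hmid := middle_bound f C₀ hC₀ hinc hs hst n₀ h2
  set M := C₀ * (Real.sqrt ((2:ℝ)^(-n₀)) * Real.sqrt (GB n₀ t)) with hM
  have htri : |f t - f s| ≤ 18 * M := by
    have e1 : |f t - f s| ≤ |f t - f (grd t n₀)| + |f (grd t n₀) - f (grd s n₀)| +
        |f (grd s n₀) - f s| := by
      have := abs_sub_le (f t) (f (grd t n₀)) (f (grd s n₀))
      have h2' := abs_sub_le (f t) (f (grd s n₀)) (f s)
      linarith
    have : |f (grd s n₀) - f s| = |f s - f (grd s n₀)| := abs_sub_comm _ _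
    rw [this] at e1
    linarith
  -- log algebra
  set L := Real.log (t/δ) with hL
  set A := |Real.log t| with hA
  have hL0 : 0 ≤ L := Real.log_nonneg ((one_le_div hδ).2 hδt)
  have hA0 : 0 ≤ A := abs_nonneg _
  have hlogδ : |Real.log δ| ≤ L + A := by
    have hld : L = Real.log t - Real.log δ := Real.log_div ht.ne' hδ.ne'
    have h1' := le_abs_self (Real.log t)
    have h2' := neg_abs_le (Real.log t)
    rcases abs_cases (Real.log δ) with ⟨he, _⟩ | ⟨he, _⟩ <;> rw [he] <;>
      rw [hA] <;> linarith
  have hn₀abs : |(n₀:ℝ)| ≤ 2 * |Real.log δ| + 1 := by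
    have hfl := Int.floor_le x
    have hfl2 := Int.lt_floor_add_one x
    have hxb : |x| = |Real.log δ| / Real.log 2 := by
      rw [hx, Real.logb, abs_div, abs_of_pos (show (0:ℝ) < Real.log 2 from Real.log_pos (by norm_num))]
    have hlog2 : (1/2:ℝ) < Real.log 2 := by
      have := Real.log_two_gt_d9; linarith
    have hxabs : |x| ≤ 2 * |Real.log δ| := by
      rw [hxb, div_le_iff₀ (by linarith)]
      have := abs_nonneg (Real.log δ)
      nlinarith
    have hfabs : |((⌊x⌋:ℤ):ℝ)| ≤ |x| + 1 := by
      have hx1 := le_abs_self x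
      have hx2 := neg_abs_le x
      rcases abs_cases ((⌊x⌋:ℤ):ℝ) with ⟨he, _⟩ | ⟨he, _⟩ <;> rw [he] <;> linarith
    have : |(n₀:ℝ)| = |((⌊x⌋:ℤ):ℝ)| := by
      rw [hn₀]; push_cast; rw [abs_neg]
    rw [this]
    linarith
  have hlog2t : Real.log (2 + t) ≤ 2 + A := by
    have hl2 : Real.log 2 ≤ 1 := by have := Real.log_two_lt_d9; linarith
    have step1 : Real.log (2 + t) ≤ Real.log 2 + Real.log (1 + t) := by
      rw [← Real.log_mul (by norm_num) (by linarith)]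
      apply Real.log_le_log (by linarith)
      nlinarith
    have step2 : Real.log (1 + t) ≤ Real.log 2 + A := by
      rcases le_or_gt t 1 with h | h
      · have : Real.log (1 + t) ≤ Real.log 2 := Real.log_le_log (by linarith) (by linarith)
        rw [hA]; have := abs_nonneg (Real.log t); linarith
      · have : Real.log (1 + t) ≤ Real.log (2 * t) := Real.log_le_log (by linarith) (by linarith)
        rw [Real.log_mul (by norm_num) (by linarith)] at this
        have hlt : Real.log t ≤ A := le_abs_self _
        linarith
    linarith
  have hGBle : GB n₀ t ≤ 6 + 4 * L + 5 * A := by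
    unfold GB
    linarith
  set D := 1 + L + ε * A with hD
  have hD1 : 1 ≤ D := by
    have : 0 ≤ ε * A := by positivity
    rw [hD]; linarith
  have hfrac : ε * (5/ε) = 5 := by field_simp
  have hGBD : GB n₀ t ≤ (10 + 5/ε) * D := by
    have h5ε : 0 < 5/ε := by positivity
    refine hGBle.trans ?_
    rw [hD]
    nlinarith
  -- combine
  have hMle : M ≤ C₀ * (Real.sqrt (10 + 5/ε) * Real.sqrt (δ * D)) := by
    rw [hM, ← Real.sqrt_mul (two_zpow_pos (-n₀)).le]
    have hkey : (2:ℝ)^(-n₀) * GB n₀ t ≤ (10 + 5/ε) * (δ * D) := by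
      have hGB0 := GB_nonneg ht n₀
      calc (2:ℝ)^(-n₀) * GB n₀ t ≤ δ * ((10 + 5/ε) * D) := by
            apply mul_le_mul h1 hGBD hGB0 hδ.le
        _ = (10 + 5/ε) * (δ * D) := by ring
    have := Real.sqrt_le_sqrt hkey
    calc C₀ * Real.sqrt ((2:ℝ)^(-n₀) * GB n₀ t)
        ≤ C₀ * Real.sqrt ((10 + 5/ε) * (δ * D)) := mul_le_mul_of_nonneg_left this hC₀
      _ = C₀ * (Real.sqrt (10 + 5/ε) * Real.sqrt (δ * D)) := by
          rw [Real.sqrt_mul (by positivity)]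
  calc |f t - f s| ≤ 18 * M := htri
    _ ≤ 18 * (C₀ * (Real.sqrt (10 + 5/ε) * Real.sqrt (δ * D))) := by linarith
    _ = (18 * Real.sqrt (10 + 5/ε) * C₀) * Real.sqrt (δ * D) := by ring


end


/-- For a standard Brownian motion W and any ε > 0, the modulus
M_B = sup_{0<s<t<∞} |W(t)-W(s)|/√((t-s)(1+log(t/(t-s))+ε|log t|)) is a.s. finite. -/
theorem stmt14 {Ω : Type*} [MeasureSpace Ω] [IsProbabilityMeasure (ℙ : Measure Ω)]
    (W : ℝ → Ω → ℝ) (hW : IsStandardBM W) (ε : ℝ) (hε : 0 < ε) :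
    ∀ᵐ ω ∂(ℙ : Measure Ω), ∃ C : ℝ, ∀ s t : ℝ, 0 < s → s < t →
      |W t ω - W s ω| ≤
        C * Real.sqrt ((t - s) * (1 + Real.log (t / (t - s)) + ε * |Real.log t|)) := by
  obtain ⟨hmeas, hcont, -, hlaw, -⟩ := hW
  filter_upwards [hcont, ae_grid_bound W hmeas hlaw] with ω hc hgrid
  obtain ⟨C₀, hC₀, hinc⟩ := hgrid
  refine ⟨18 * Real.sqrt (10 + 5/ε) * C₀, fun s t hs hst => ?_⟩
  exact chaining (fun u => W u ω) C₀ hc hC₀ hinc hε s t hs hst
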